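/- arXiv:1809.06002 — 6 statements merged into one kernel-verified Lean document; each statement's English description precedes it below -/
import Mathlib

section
/- Let d = (d_1, ..., d_N) be positive reals and L(d) the weighted ring-Laplacian matrix (entries as above). Then every real eigenvalue η of L(d) satisfies 0 ≤ η ≤ 2. -/
/-- The weighted ring Laplacian `L(d)` of the paper: indices cyclic mod `N`. -/
noncomputable def ringLap {N : ℕ} [NeZero N] (d : Fin N → ℝ) : Matrix (Fin N) (Fin N) ℝ :=
  Matrix.of fun i j =>
    (if j = i then d (i + 1) / (d (i + 1) + d i) + d (i - 1) / (d i + d (i - 1)) else 0)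
      - (if j = i + 1 then d i / (d (i + 1) + d i) else 0)
      - (if j = i - 1 then d i / (d i + d (i - 1)) else 0)

theorem stmt3 {N : ℕ} (hN : 2 ≤ N) [NeZero N] (d : Fin N → ℝ) (hd : ∀ i, 0 < d i)
    (η : ℝ) (v : Fin N → ℝ) (hv : v ≠ 0) (hev : (ringLap d).mulVec v = η • v) :
    0 ≤ η ∧ η ≤ 2 := by
  have hd0 : ∀ i, d i ≠ 0 := fun i => (hd i).ne'
  have hds : ∀ i j : Fin N, d i + d j ≠ 0 := fun i j => (add_pos (hd i) (hd j)).ne'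
  have hmul : ∀ i, (ringLap d).mulVec v i
      = (d (i+1) / (d (i+1) + d i) + d (i-1) / (d i + d (i-1))) * v i
        - d i / (d (i+1) + d i) * v (i+1) - d i / (d i + d (i-1)) * v (i-1) := by
    intro i
    simp [ringLap, Matrix.mulVec, dotProduct, sub_mul, ite_mul,
      Finset.sum_sub_distrib]
  have hev' : ∀ i, (d (i+1) / (d (i+1) + d i) + d (i-1) / (d i + d (i-1))) * v i
        - d i / (d (i+1) + d i) * v (i+1) - d i / (d i + d (i-1)) * v (i-1)
      = η * v i := by
    intro i
    rw [← hmul i, hev]; simp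
  have shift : ∀ f : Fin N → Fin N → ℝ, ∑ i, f i (i-1) = ∑ i, f (i+1) i := by
    intro f
    exact Fintype.sum_equiv (Equiv.subRight (1:Fin N)) _ _ (fun i => by simp)
  set S := ∑ i, v i ^ 2 / d i with hS
  have hSpos : 0 < S := by
    obtain ⟨i, hi⟩ := Function.ne_iff.mp hv
    refine Finset.sum_pos' (fun j _ => div_nonneg (sq_nonneg _) (hd j).le)
      ⟨i, Finset.mem_univ i, ?_⟩
    exact div_pos (lt_of_le_of_ne (sq_nonneg _) (Ne.symm (pow_ne_zero 2 hi))) (hd i)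
  have split : η * S = ∑ i, ((d (i+1)/(d (i+1)+d i)) * v i * (v i / d i)
        - v i * v (i+1)/(d (i+1)+d i))
      + ∑ i, ((d (i-1)/(d i + d (i-1))) * v i * (v i / d i)
        - v i * v (i-1)/(d i + d (i-1))) := by
    rw [hS, Finset.mul_sum, ← Finset.sum_add_distrib]
    refine Finset.sum_congr rfl (fun i _ => ?_)
    have h := (hev' i).symm
    have e1 := hd0 i
    have e2 := hds (i+1) i
    have e3 := hds i (i-1)
    calc η * (v i ^ 2 / d i) = (η * v i) * (v i / d i) := by ring
      _ = ((d (i+1) / (d (i+1) + d i) + d (i-1) / (d i + d (i-1))) * v i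
            - d i / (d (i+1) + d i) * v (i+1) - d i / (d i + d (i-1)) * v (i-1))
          * (v i / d i) := by rw [h]
      _ = _ := by field_simp; ring
  have key1 : η * S = ∑ i, d i * d (i+1) / (d i + d (i+1))
      * (v i / d i - v (i+1) / d (i+1))^2 := by
    rw [split, shift (fun i j => (d j/(d i + d j)) * v i * (v i / d i)
        - v i * v j/(d i + d j)), ← Finset.sum_add_distrib]
    refine Finset.sum_congr rfl (fun i _ => ?_)
    have e1 := hd0 i
    have e2 := hd0 (i+1)
    have e3 := hds (i+1) i
    have e4 := hds i (i+1)
    field_simp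
    ring
  have key2 : (2 - η) * S = ∑ i, (v i + v (i+1))^2 / (d i + d (i+1)) := by
    have h2 : S = ∑ i, v (i+1) ^ 2 / d (i+1) := shift (fun i _ => v i ^ 2 / d i)
    have step : (2 - η) * S = ∑ i, (v i ^ 2 / d i + v (i+1)^2 / d (i+1)
        - d i * d (i+1) / (d i + d (i+1)) * (v i / d i - v (i+1) / d (i+1))^2) := by
      rw [Finset.sum_sub_distrib, Finset.sum_add_distrib, ← key1, ← h2, ← hS]
      ring
    rw [step]
    refine Finset.sum_congr rfl (fun i _ => ?_)
    have e1 := hd0 i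
    have e2 := hd0 (i+1)
    have e4 := hds i (i+1)
    field_simp
    ring
  constructor
  · have h1 : 0 ≤ η * S := by
      rw [key1]
      refine Finset.sum_nonneg (fun i _ => ?_)
      have p1 := hd i; have p2 := hd (i+1)
      positivity
    nlinarith
  · have h2 : 0 ≤ (2 - η) * S := by
      rw [key2]
      exact Finset.sum_nonneg
        (fun i _ => div_nonneg (sq_nonneg _) (add_pos (hd i) (hd (i+1))).le)
    nlinarith
end

section
/- Let d = (d_1, ..., d_N) be positive reals and L(d) the weighted ring-Laplacian matrix (entries as above). Then L(d) is diagonalizable over the complex numbers, and 0 is an eigenvalue of algebraic multiplicity one. -/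
open Matrix Polynomial Complex

section
variable {N : ℕ} [NeZero N] {d : Fin N → ℝ} (hd : ∀ i, 0 < d i)

include hd
lemma rL_row_d (i : Fin N) : ∑ j, ringLap d i j * d j = 0 := by
  have h1 : d (i+1) + d i ≠ 0 := (add_pos (hd _) (hd _)).ne'
  have h2 : d i + d (i-1) ≠ 0 := (add_pos (hd _) (hd _)).ne'
  simp only [ringLap, Matrix.of_apply, sub_mul, Finset.sum_sub_distrib, ite_mul, zero_mul,
    Finset.sum_ite_eq', Finset.mem_univ, if_true]
  field_simp
  ring

lemma rL_symm (hN : 2 ≤ N) (i j : Fin N) : ringLap d i j * d j = ringLap d j i * d i := by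
  have e1 : ∀ k : Fin N, k + 1 - 1 = k := fun k => add_sub_cancel_right k 1
  have e2 : ∀ k : Fin N, k - 1 + 1 = k := fun k => sub_add_cancel k 1
  have hone : (1 : Fin N) ≠ 0 := by
    intro h
    have := congrArg Fin.val h
    simp [Fin.val_one', Nat.mod_eq_of_lt hN] at this
  have haux : ∀ k : Fin N, k ≠ k + 1 := fun k h => hone (by rwa [left_eq_add] at h)
  have haux2 : ∀ k : Fin N, k ≠ k - 1 := by
    intro k h
    apply haux k
    have : k + 1 = k := by conv_lhs => rw [h, e2]
    exact this.symm
  have c1 : (i = j) = (j = i) := by apply propext; exact eq_comm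
  have c2 : (i = j - 1) = (j = i + 1) := by
    apply propext; constructor
    · intro h; rw [h, e2]
    · intro h; rw [h, e1]
  have c3 : (i = j + 1) = (j = i - 1) := by
    apply propext; constructor
    · intro h; rw [h, e1]
    · intro h; rw [h, e2]
  simp only [ringLap, Matrix.of_apply, c1, c2, c3]
  by_cases ha : j = i
  · subst ha
    simp only [if_neg (haux j), if_neg (haux2 j)]
  · by_cases hb : j = i + 1
    · subst hb
      rw [if_neg ha, if_neg ha, if_pos rfl, if_pos rfl]
      by_cases hc : i + 1 = i - 1
      · rw [if_pos hc, if_pos hc]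
        have e3 : i + 1 + 1 = i := by rw [hc, e2]
        rw [e1, e3, ← hc]
        ring
      · rw [if_neg hc, if_neg hc, e1]
        ring
    · by_cases hc : j = i - 1
      · subst hc
        rw [if_neg ha, if_neg ha, if_neg hb, if_neg hb, if_pos rfl, if_pos rfl, e2]
        ring
      · rw [if_neg ha, if_neg ha, if_neg hb, if_neg hb, if_neg hc, if_neg hc]
        ring

include hd in
lemma sLap_herm (hN : 2 ≤ N) :
    (Matrix.diagonal (fun i => ((Real.sqrt (d i))⁻¹ : ℂ)) * (ringLap d).map Complex.ofReal *
      Matrix.diagonal (fun i => (Real.sqrt (d i) : ℂ))).IsHermitian := by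
  have hsq : ∀ i, Real.sqrt (d i) ≠ 0 := fun i => Real.sqrt_ne_zero'.mpr (hd i)
  have hms : ∀ i, Real.sqrt (d i) * Real.sqrt (d i) = d i :=
    fun i => Real.mul_self_sqrt (hd i).le
  unfold Matrix.IsHermitian
  ext i j
  rw [Matrix.conjTranspose_apply, Matrix.mul_diagonal, Matrix.mul_diagonal,
    Matrix.diagonal_mul, Matrix.diagonal_mul, Matrix.map_apply, Matrix.map_apply]
  have key := rL_symm (d := d) hd hN j i
  rw [← hms i, ← hms j] at key
  have hi := hsq i
  have hj := hsq j
  have h : ((Real.sqrt (d j))⁻¹ * (ringLap d j i) * Real.sqrt (d i) : ℝ)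
      = ((Real.sqrt (d i))⁻¹ * (ringLap d i j) * Real.sqrt (d j) : ℝ) := by
    rw [inv_mul_eq_div, inv_mul_eq_div, div_mul_eq_mul_div, div_mul_eq_mul_div,
      div_eq_div_iff hj hi]
    linear_combination key
  have hconj : star (((Real.sqrt (d j))⁻¹ : ℂ) * ((ringLap d j i : ℝ) : ℂ)
        * ((Real.sqrt (d i) : ℝ) : ℂ))
      = ((Real.sqrt (d j))⁻¹ : ℂ) * ((ringLap d j i : ℝ) : ℂ) * ((Real.sqrt (d i) : ℝ) : ℂ) := by
    rw [RCLike.star_def, _root_.map_mul, _root_.map_mul, map_inv₀, Complex.conj_ofReal,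
      Complex.conj_ofReal, Complex.conj_ofReal]
  rw [hconj]
  exact_mod_cast congrArg Complex.ofReal h

include hd in
lemma key_kernel (y : Fin N → ℂ)
    (hy : (ringLap d).map Complex.ofReal *ᵥ y = 0) (i : Fin N) :
    (d (i+1) : ℂ) * y i = (d i : ℂ) * y (i+1) := by
  have e1 : ∀ k : Fin N, k + 1 - 1 = k := fun k => add_sub_cancel_right k 1
  have hdne : ∀ k : Fin N, (d k : ℂ) ≠ 0 :=
    fun k => Complex.ofReal_ne_zero.mpr (hd k).ne'
  have hsne : ∀ k l : Fin N, (d k : ℂ) + (d l : ℂ) ≠ 0 := fun k l => by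
    rw [← Complex.ofReal_add]
    exact Complex.ofReal_ne_zero.mpr (add_pos (hd k) (hd l)).ne'
  have hrow : ∀ k : Fin N, ((ringLap d).map Complex.ofReal *ᵥ y) k
      = ((d (k+1) / (d (k+1) + d k) + d (k-1) / (d k + d (k-1)) : ℝ) : ℂ) * y k
        - ((d k / (d (k+1) + d k) : ℝ) : ℂ) * y (k+1)
        - ((d k / (d k + d (k-1)) : ℝ) : ℂ) * y (k-1) := by
    intro k
    simp only [Matrix.mulVec, dotProduct, Matrix.map_apply, ringLap, Matrix.of_apply,
      Complex.ofReal_sub, apply_ite Complex.ofReal, Complex.ofReal_zero, sub_mul,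
      Finset.sum_sub_distrib, ite_mul, zero_mul, Finset.sum_ite_eq', Finset.mem_univ, if_true]
  set F1 : Fin N → ℂ := fun k => (starRingEnd ℂ) (y k) * (d k : ℂ)⁻¹ *
      (((d (k+1) / (d (k+1) + d k) : ℝ) : ℂ) * y k
        - ((d k / (d (k+1) + d k) : ℝ) : ℂ) * y (k+1)) with hF1
  set F2 : Fin N → ℂ := fun k => (starRingEnd ℂ) (y k) * (d k : ℂ)⁻¹ *
      (((d (k-1) / (d k + d (k-1)) : ℝ) : ℂ) * y k
        - ((d k / (d k + d (k-1)) : ℝ) : ℂ) * y (k-1)) with hF2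
  have hFsum : ∑ k, (F1 k + F2 k) = 0 := by
    have hpt : ∀ k, F1 k + F2 k
        = (starRingEnd ℂ) (y k) * (d k : ℂ)⁻¹ * (((ringLap d).map Complex.ofReal *ᵥ y) k) := by
      intro k
      rw [hrow k, hF1, hF2]
      push_cast
      ring
    rw [Finset.sum_congr rfl (fun k _ => hpt k)]
    simp [hy]
  have hre : ∑ k, F2 (k+1) = ∑ k, F2 k :=
    Fintype.sum_equiv (Equiv.addRight (1:Fin N)) (fun k => F2 (k+1)) F2 (fun k => rfl)
  set z : Fin N → ℂ := fun k => (d (k+1) : ℂ) * y k - (d k : ℂ) * y (k+1) with hz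
  set g : Fin N → ℝ := fun k =>
    Complex.normSq (z k) / ((d k + d (k+1)) * (d k * d (k+1))) with hg
  have hpoint : ∀ k, F1 k + F2 (k+1) = ((g k : ℝ) : ℂ) := by
    intro k
    have hd1 := hdne k
    have hd2 := hdne (k+1)
    have hd3 := hsne k (k+1)
    have hd4 := hsne (k+1) k
    rw [hF1, hF2, hg]
    simp only [e1]
    push_cast
    rw [Complex.normSq_eq_conj_mul_self, hz]
    simp only [map_sub, _root_.map_mul, Complex.conj_ofReal]
    field_simp
    ring
  have hsumg : ((∑ k, g k : ℝ) : ℂ) = 0 := by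
    push_cast
    calc ∑ k, ((g k : ℝ) : ℂ) = ∑ k, (F1 k + F2 (k+1)) := by
          exact Finset.sum_congr rfl (fun k _ => (hpoint k).symm)
      _ = ∑ k, F1 k + ∑ k, F2 (k+1) := Finset.sum_add_distrib
      _ = ∑ k, F1 k + ∑ k, F2 k := by rw [hre]
      _ = ∑ k, (F1 k + F2 k) := Finset.sum_add_distrib.symm
      _ = 0 := hFsum
  have hg0 : ∑ k, g k = 0 := by exact_mod_cast hsumg
  have hgnn : ∀ k : Fin N, 0 ≤ g k := by
    intro k
    apply div_nonneg (Complex.normSq_nonneg _)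
    have := mul_pos (add_pos (hd k) (hd (k+1))) (mul_pos (hd k) (hd (k+1)))
    exact this.le
  have hgz : g i = 0 :=
    (Finset.sum_eq_zero_iff_of_nonneg (fun k _ => hgnn k)).mp hg0 i (Finset.mem_univ i)
  have hgz2 : Complex.normSq (z i) / ((d i + d (i+1)) * (d i * d (i+1))) = 0 := hgz
  have hdenne : ((d i + d (i+1)) * (d i * d (i+1))) ≠ 0 :=
    (mul_pos (add_pos (hd i) (hd (i+1))) (mul_pos (hd i) (hd (i+1)))).ne'
  rcases _root_.div_eq_zero_iff.mp hgz2 with hgz | hgz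
  · have hzi : z i = 0 := Complex.normSq_eq_zero.mp hgz
    have : (d (i+1) : ℂ) * y i - (d i : ℂ) * y (i+1) = 0 := hzi
    exact sub_eq_zero.mp this
  · exact absurd hgz hdenne

omit hd in
lemma ratio_const (y : Fin N → ℂ) (hdne : ∀ k : Fin N, (d k : ℂ) ≠ 0)
    (h : ∀ i : Fin N, (d (i+1) : ℂ) * y i = (d i : ℂ) * y (i+1)) :
    ∀ i : Fin N, (d 0 : ℂ) * y i = y 0 * (d i : ℂ) := by
  suffices H : ∀ k (hk : k < N), (d 0 : ℂ) * y ⟨k, hk⟩ = y 0 * (d ⟨k, hk⟩ : ℂ) by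
    intro i
    rcases i with ⟨k, hk⟩
    exact H k hk
  intro k
  induction k with
  | zero =>
    intro hk
    have h0 : (⟨0, hk⟩ : Fin N) = 0 := by
      ext
      simp [Fin.val_zero]
    rw [h0]
    ring
  | succ n ih =>
    intro hk
    have hn : n < N := Nat.lt_of_succ_lt hk
    have hsucc : (⟨n, hn⟩ : Fin N) + 1 = ⟨n+1, hk⟩ := by
      ext
      simp [Fin.val_add, Fin.val_one', Nat.mod_eq_of_lt hk,
        Nat.mod_eq_of_lt (Nat.lt_of_succ_lt hk)]
    have step := h ⟨n, hn⟩
    rw [hsucc] at step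
    have ihn := ih hn
    have key : (d 0 : ℂ) * y ⟨n+1, hk⟩ * (d ⟨n, hn⟩ : ℂ)
        = y 0 * (d ⟨n+1, hk⟩ : ℂ) * (d ⟨n, hn⟩ : ℂ) := by
      linear_combination (d (⟨n+1, hk⟩ : Fin N) : ℂ) * ihn - (d 0 : ℂ) * step
    exact mul_right_cancel₀ (hdne ⟨n, hn⟩) key
end

lemma my_charpoly_diag {n : Type*} [Fintype n] [DecidableEq n] (c : n → ℂ) :
    (Matrix.diagonal c).charpoly = ∏ i, (X - C (c i)) := by
  have h : (Matrix.diagonal c).charmatrix = Matrix.diagonal fun i => (X : ℂ[X]) - C (c i) := by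
    ext i j
    by_cases h : i = j
    · subst h
      rw [Matrix.charmatrix_apply_eq, Matrix.diagonal_apply_eq, Matrix.diagonal_apply_eq]
    · rw [Matrix.charmatrix_apply_ne _ _ _ h, Matrix.diagonal_apply_ne _ h,
        Matrix.diagonal_apply_ne _ h, map_zero, neg_zero]
  rw [Matrix.charpoly, h, Matrix.det_diagonal]

lemma my_charpoly_conj {n : Type*} [Fintype n] [DecidableEq n] (P A : Matrix n n ℂ)
    (h : IsUnit P.det) : (P⁻¹ * A * P).charpoly = A.charpoly := by
  have h1 : P⁻¹ * P = 1 := Matrix.nonsing_inv_mul P h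
  have key : Matrix.charmatrix (P⁻¹ * A * P)
      = (P⁻¹).map C * Matrix.charmatrix A * P.map C := by
    rw [Matrix.charmatrix, Matrix.charmatrix, RingHom.mapMatrix_apply, RingHom.mapMatrix_apply]
    rw [Matrix.mul_sub, Matrix.sub_mul]
    congr 1
    · symm
      rw [← Matrix.scalar_commute (X : ℂ[X]) (fun r' => Commute.all _ _) (P⁻¹.map C),
        Matrix.mul_assoc, ← Matrix.map_mul, h1]
      simp
    · rw [Matrix.map_mul, Matrix.map_mul]
  rw [Matrix.charpoly, Matrix.charpoly, key, Matrix.det_mul, Matrix.det_mul,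
    mul_comm ((P⁻¹).map C).det, mul_assoc, ← Matrix.det_mul, ← Matrix.map_mul, h1]
  simp

theorem stmt4 {N : ℕ} (hN : 2 ≤ N) [NeZero N] (d : Fin N → ℝ) (hd : ∀ i, 0 < d i) :
    (∃ P : Matrix (Fin N) (Fin N) ℂ, IsUnit P.det ∧
        (P⁻¹ * (ringLap d).map Complex.ofReal * P).IsDiag) ∧
      ((ringLap d).map Complex.ofReal).charpoly.rootMultiplicity 0 = 1 := by
  classical
  set Lc := (ringLap d).map Complex.ofReal with hLc
  set Q : Matrix (Fin N) (Fin N) ℂ := Matrix.diagonal (fun i => (Real.sqrt (d i) : ℂ)) with hQ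
  set Qi : Matrix (Fin N) (Fin N) ℂ :=
    Matrix.diagonal (fun i => ((Real.sqrt (d i))⁻¹ : ℂ)) with hQi
  have hsq : ∀ i, Real.sqrt (d i) ≠ 0 := fun i => Real.sqrt_ne_zero'.mpr (hd i)
  have hms : ∀ i, Real.sqrt (d i) * Real.sqrt (d i) = d i :=
    fun i => Real.mul_self_sqrt (hd i).le
  have hsqC : ∀ i, ((Real.sqrt (d i) : ℝ) : ℂ) ≠ 0 := fun i => Complex.ofReal_ne_zero.mpr (hsq i)
  have hdC : ∀ k : Fin N, (d k : ℂ) ≠ 0 := fun k => Complex.ofReal_ne_zero.mpr (hd k).ne'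
  have hQQi : Q * Qi = 1 := by
    rw [hQ, hQi, Matrix.diagonal_mul_diagonal]
    have h : (fun i => (Real.sqrt (d i) : ℂ) * ((Real.sqrt (d i) : ℂ))⁻¹) = fun _ => (1:ℂ) :=
      funext fun i => mul_inv_cancel₀ (hsqC i)
    rw [h, Matrix.diagonal_one]
  have hQiQ : Qi * Q = 1 := by
    rw [hQi, hQ, Matrix.diagonal_mul_diagonal]
    have h : (fun i => ((Real.sqrt (d i) : ℂ))⁻¹ * (Real.sqrt (d i) : ℂ)) = fun _ => (1:ℂ) :=
      funext fun i => inv_mul_cancel₀ (hsqC i)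
    rw [h, Matrix.diagonal_one]
  set S := Qi * Lc * Q with hSdef
  have hS : S.IsHermitian := sLap_herm hd hN
  set U : Matrix (Fin N) (Fin N) ℂ := (hS.eigenvectorUnitary : Matrix (Fin N) (Fin N) ℂ)
    with hUdef
  have hU : star U * U = 1 :=
    Matrix.mem_unitaryGroup_iff'.mp (Matrix.IsHermitian.eigenvectorUnitary hS).2
  have hU' : U * star U = 1 :=
    Matrix.mem_unitaryGroup_iff.mp (Matrix.IsHermitian.eigenvectorUnitary hS).2
  set D := Matrix.diagonal ((RCLike.ofReal : ℝ → ℂ) ∘ hS.eigenvalues) with hDdef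
  have spec : S = U * D * star U := hS.spectral_theorem
  set P := Q * U with hPdef
  have hdetP : IsUnit P.det := by
    rw [hPdef, Matrix.det_mul]
    exact (Matrix.isUnit_det_of_right_inverse hQQi).mul (Matrix.isUnit_det_of_left_inverse hU)
  have hPinv : P⁻¹ = star U * Qi := by
    rw [hPdef, Matrix.mul_inv_rev, Matrix.inv_eq_left_inv hU, Matrix.inv_eq_right_inv hQQi]
  have hdiag : P⁻¹ * Lc * P = D := by
    rw [hPinv, hPdef]
    calc star U * Qi * Lc * (Q * U) = star U * (Qi * Lc * Q) * U := by
          simp only [Matrix.mul_assoc]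
      _ = star U * (U * D * star U) * U := by rw [← hSdef, ← spec]
      _ = (star U * U) * D * (star U * U) := by simp only [Matrix.mul_assoc]
      _ = D := by rw [hU, Matrix.one_mul, Matrix.mul_one]
  -- kernel computation
  set v : Fin N → ℂ := fun i => (Real.sqrt (d i) : ℂ) with hv
  have hvne : v ≠ 0 := by
    intro h
    exact hsqC 0 (congrFun h 0)
  have hQv : Q *ᵥ v = fun i => (d i : ℂ) := by
    funext i
    rw [hQ, Matrix.mulVec_diagonal]
    simp only [hv]
    exact_mod_cast congrArg Complex.ofReal (hms i)
  have hLd : Lc *ᵥ (fun j => (d j : ℂ)) = 0 := by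
    funext i
    have h1 : (Lc *ᵥ (fun j => (d j : ℂ))) i = ∑ j, ((ringLap d i j * d j : ℝ) : ℂ) := by
      simp [hLc, Matrix.mulVec, dotProduct, Matrix.map_apply]
    rw [h1, ← Complex.ofReal_sum, rL_row_d hd i, Complex.ofReal_zero, Pi.zero_apply]
  have hSv : S *ᵥ v = 0 := by
    rw [hSdef, ← Matrix.mulVec_mulVec, ← Matrix.mulVec_mulVec, hQv, hLd, Matrix.mulVec_zero]
  have hker : LinearMap.ker S.mulVecLin = Submodule.span ℂ {v} := by
    apply le_antisymm
    · intro x hx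
      rw [LinearMap.mem_ker, Matrix.mulVecLin_apply] at hx
      set y := Q *ᵥ x with hy
      have hLy : Lc *ᵥ y = 0 := by
        have h1 : Lc * Q = Q * S := by
          rw [hSdef, ← Matrix.mul_assoc, ← Matrix.mul_assoc, hQQi, Matrix.one_mul]
        rw [hy, Matrix.mulVec_mulVec, h1, ← Matrix.mulVec_mulVec, hx, Matrix.mulVec_zero]
      have hzrel := key_kernel hd y hLy
      have hratio := ratio_const (d := d) y hdC hzrel
      rw [Submodule.mem_span_singleton]
      refine ⟨y 0 / (d 0 : ℂ), ?_⟩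
      funext i
      have hxi : x i = ((Real.sqrt (d i) : ℂ))⁻¹ * y i := by
        have h2 : x = Qi *ᵥ y := by
          rw [hy, Matrix.mulVec_mulVec, hQiQ, Matrix.one_mulVec]
        conv_lhs => rw [h2]
        rw [hQi, Matrix.mulVec_diagonal]
      rw [Pi.smul_apply, smul_eq_mul, hxi]
      simp only [hv]
      have h3 : (d i : ℂ) = (Real.sqrt (d i) : ℂ) * (Real.sqrt (d i) : ℂ) := by
        exact_mod_cast (hms i).symm
      have hri := hratio i
      rw [h3] at hri
      have hne0 := hsqC i
      have hne1 := hdC 0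
      field_simp
      linear_combination -hri
    · rw [Submodule.span_le, Set.singleton_subset_iff]
      rw [SetLike.mem_coe, LinearMap.mem_ker, Matrix.mulVecLin_apply]
      exact hSv
  have hkerrank : Module.finrank ℂ (LinearMap.ker S.mulVecLin) = 1 := by
    rw [hker]
    exact finrank_span_singleton hvne
  have hrange := LinearMap.finrank_range_add_finrank_ker S.mulVecLin
  have htop : Module.finrank ℂ (Fin N → ℂ) = N := by
    rw [Module.finrank_fintype_fun_eq_card, Fintype.card_fin]
  have hrankS : S.rank + 1 = N := by
    have : S.rank = Module.finrank ℂ (LinearMap.range S.mulVecLin) := rfl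
    rw [this, ← hkerrank, hrange, htop]
  have hcard1 : Fintype.card {i // hS.eigenvalues i ≠ 0} + 1 = N := by
    rw [← Matrix.IsHermitian.rank_eq_card_non_zero_eigs]
    exact hrankS
  have hcard0 : Fintype.card {i // hS.eigenvalues i = 0} = 1 := by
    have hcompl := Fintype.card_subtype_compl (fun i => hS.eigenvalues i = 0)
    rw [Fintype.card_fin] at hcompl
    have hcard1' : Fintype.card {i // ¬ hS.eigenvalues i = 0} + 1 = N := hcard1
    omega
  have hcp : Lc.charpoly = ∏ i, (X - C (((RCLike.ofReal : ℝ → ℂ) ∘ hS.eigenvalues) i)) := by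
    rw [← my_charpoly_conj P Lc hdetP, hdiag, hDdef, my_charpoly_diag]
  refine ⟨⟨P, hdetP, by rw [hdiag, hDdef]; exact Matrix.isDiag_diagonal _⟩, ?_⟩
  rw [hcp, ← Polynomial.count_roots]
  have hprod : ∏ i : Fin N, (X - C (((RCLike.ofReal : ℝ → ℂ) ∘ hS.eigenvalues) i))
      = ((Finset.univ.val.map (fun i => (((RCLike.ofReal : ℝ → ℂ) ∘ hS.eigenvalues) i))).map
          (fun a => X - C a)).prod := by
    rw [Multiset.map_map]
    rfl
  rw [hprod, Polynomial.roots_multiset_prod_X_sub_C, Multiset.count_map]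
  have hfc : Multiset.filter
        (fun i => (0:ℂ) = ((RCLike.ofReal : ℝ → ℂ) ∘ hS.eigenvalues) i) Finset.univ.val
      = Multiset.filter (fun i => hS.eigenvalues i = 0) Finset.univ.val :=
    Multiset.filter_congr (fun x _ => by
      rw [Function.comp_apply, eq_comm, RCLike.ofReal_eq_zero])
  have hfilter : (Multiset.filter (fun i => hS.eigenvalues i = 0) Finset.univ.val).card
      = Fintype.card {i // hS.eigenvalues i = 0} := by
    rw [Fintype.card_subtype, ← Finset.filter_val]
    rfl
  rw [hfc, hfilter, hcard0]
end

section
/- Let d = (d_1, ..., d_N) be positive reals and L(d) the weighted ring-Laplacian matrix (entries as above). If N is even, then 2 is an eigenvalue of L(d); if N is odd, then 2 is not an eigenvalue of L(d). -/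
lemma evalCharpoly {N : ℕ} (M : Matrix (Fin N) (Fin N) ℝ) (t : ℝ) :
    M.charpoly.eval t = (Matrix.diagonal (fun _ => t) - M).det := by
  rw [Matrix.charpoly, ← Polynomial.coe_evalRingHom, RingHom.map_det]
  congr 1; ext i j
  by_cases h : i = j <;>
    simp [Matrix.charmatrix_apply, Matrix.map_apply, Matrix.diagonal_apply, h]

open Matrix in
lemma ringLap_mulVec {N : ℕ} [NeZero N] (d v : Fin N → ℝ) (hd : ∀ i, 0 < d i) (i : Fin N) :
    ((Matrix.diagonal (fun _ => (2:ℝ)) - ringLap d) *ᵥ v) i =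
      d i / (d (i+1) + d i) * (v i + v (i+1)) + d i / (d i + d (i-1)) * (v i + v (i-1)) := by
  have hp : d (i+1) + d i ≠ 0 := ne_of_gt (add_pos (hd _) (hd _))
  have hq : d i + d (i-1) ≠ 0 := ne_of_gt (add_pos (hd _) (hd _))
  simp only [Matrix.mulVec, dotProduct, Matrix.sub_apply, ringLap, Matrix.of_apply,
    Matrix.diagonal_apply, sub_mul, ite_mul, zero_mul, add_mul, Finset.sum_sub_distrib,
    Finset.sum_ite_eq, Finset.sum_ite_eq', Finset.mem_univ, if_true, Finset.sum_add_distrib]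
  field_simp
  ring

lemma negOnePow_congr {a b : ℕ} (h : a % 2 = b % 2) : (-1:ℝ)^a = (-1:ℝ)^b := by
  conv_lhs => rw [← Nat.div_add_mod a 2]
  conv_rhs => rw [← Nat.div_add_mod b 2]
  rw [h]
  simp [pow_add, pow_mul]

open Fin.NatCast in
theorem stmt5 {N : ℕ} (hN : 2 ≤ N) [NeZero N] (d : Fin N → ℝ) (hd : ∀ i, 0 < d i) :
    (Even N → (ringLap d).charpoly.IsRoot 2) ∧
      (Odd N → ¬ (ringLap d).charpoly.IsRoot 2) := by
  have hone : ((1 : Fin N) : ℕ) = 1 := by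
    have : ((1:ℕ) : Fin N) = (1 : Fin N) := by push_cast; ring
    rw [← this, Fin.val_natCast, Nat.mod_eq_of_lt (by omega)]
  constructor
  · -- even case
    intro hEven
    rw [Polynomial.IsRoot, evalCharpoly, ← Matrix.exists_mulVec_eq_zero_iff]
    set v : Fin N → ℝ := fun i => (-1:ℝ)^(i:ℕ) with hv
    have hsucc : ∀ i : Fin N, v (i+1) = -v i := by
      intro i
      have hmod : ((i+1 : Fin N) : ℕ) % 2 = ((i:ℕ)+1) % 2 := by
        rw [Fin.val_add, hone, Nat.mod_mod_of_dvd _ hEven.two_dvd]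
      have : v (i+1) = (-1:ℝ)^((i:ℕ)+1) := negOnePow_congr hmod
      rw [this, pow_succ]
      simp [hv]
    refine ⟨v, ?_, ?_⟩
    · intro h
      have : v 0 = 0 := congrFun h 0
      simp [hv] at this
    · funext i
      rw [ringLap_mulVec d v hd i]
      have h1 : v i + v (i+1) = 0 := by rw [hsucc i]; ring
      have h2 : v i + v (i-1) = 0 := by
        have := hsucc (i-1); rw [sub_add_cancel] at this
        rw [this]; ring
      simp [h1, h2]
  · -- odd case
    intro hOdd hroot
    rw [Polynomial.IsRoot, evalCharpoly, ← Matrix.exists_mulVec_eq_zero_iff] at hroot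
    obtain ⟨v, hv0, hmv⟩ := hroot
    set w : Fin N → ℝ := fun i => v i + v (i+1) with hw
    have hrel : ∀ i : Fin N, d i / (d (i+1) + d i) * w i
        = -(d i / (d i + d (i-1)) * w (i-1)) := by
      intro i
      have h0 : ((Matrix.diagonal (fun _ => (2:ℝ)) - ringLap d).mulVec v) i = 0 := by
        rw [hmv]; rfl
      rw [ringLap_mulVec d v hd i] at h0
      have hwm : w (i-1) = v i + v (i-1) := by
        simp only [hw, sub_add_cancel]; ring
      rw [hwm]; simp only [hw]; linarith
    have hwzero : ∀ j : Fin N, w j = 0 := by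
      intro j
      have key : ∀ k : ℕ, ∃ r : ℝ, 0 < r ∧ w (j + (k:ℕ)) = (-1:ℝ)^k * r * w j := by
        intro k
        induction k with
        | zero => exact ⟨1, one_pos, by simp⟩
        | succ k ih =>
          obtain ⟨r, hr, hwk⟩ := ih
          set i : Fin N := j + ((k+1 : ℕ) : Fin N) with hi
          set b := d i / (d (i+1) + d i) with hb
          set c := d i / (d i + d (i-1)) with hc
          have hB : 0 < b := div_pos (hd _) (add_pos (hd _) (hd _))
          have hC : 0 < c := div_pos (hd _) (add_pos (hd _) (hd _))
          have him : i - 1 = j + ((k : ℕ) : Fin N) := by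
            rw [hi, Nat.cast_succ, ← add_assoc, add_sub_cancel_right]
          refine ⟨c / b * r, mul_pos (div_pos hC hB) hr, ?_⟩
          have h1 := hrel i
          rw [← hb, ← hc, him, hwk] at h1
          have h2 : w i = -(c * ((-1:ℝ)^k * r * w j)) / b := by
            rw [eq_div_iff hB.ne']; linarith
          rw [h2, pow_succ]
          ring
      obtain ⟨r, hr, hkey⟩ := key N
      rw [Fin.natCast_self, add_zero, hOdd.neg_one_pow] at hkey
      nlinarith [hkey]
    have hsucc : ∀ i : Fin N, v (i+1) = -v i := by
      intro i; have := hwzero i; simp only [hw] at this; linarith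
    have hcast : ∀ k : ℕ, v ((k:ℕ) : Fin N) = (-1:ℝ)^k * v 0 := by
      intro k
      induction k with
      | zero => simp
      | succ k ih =>
        have : ((k+1 : ℕ) : Fin N) = ((k:ℕ) : Fin N) + 1 := by push_cast; ring
        rw [this, hsucc, ih, pow_succ]; ring
    have hv00 : v 0 = 0 := by
      have := hcast N
      rw [Fin.natCast_self, hOdd.neg_one_pow] at this
      linarith
    apply hv0
    funext i
    have := hcast i
    rw [Fin.cast_val_eq_self, hv00] at this
    simp [this]
end

section
/- Let L be an N×N real matrix that is diagonalizable, has all eigenvalues real and nonnegative, and has 0 as an eigenvalue of algebraic multiplicity exactly 1. Let λ_1, λ_2 > 0 and define Φ = [[0, I_N], [-λ_1 L^T, -λ_2 L^T - I_N]]. Then Φ has 0 as an eigenvalue of algebraic multiplicity exactly 1, and every other eigenvalue of Φ has strictly negative real part. -/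
open Polynomial Matrix

lemma aux_det_fromBlocks {n : Type*} [Fintype n] [DecidableEq n] {R : Type*} [CommRing R]
    (x : R) (Cb Db : Matrix n n R) :
    (Matrix.fromBlocks (x • (1 : Matrix n n R)) (-1) Cb Db).det *
      (Matrix.fromBlocks (0 : Matrix n n R) (-1) (1 : Matrix n n R) 0).det
    = (Cb + x • Db).det := by
  have h1 : Matrix.fromBlocks (x • (1 : Matrix n n R)) (-1) Cb Db *
      Matrix.fromBlocks 1 0 (x • (1 : Matrix n n R)) 1 =
      Matrix.fromBlocks 0 (-1) (Cb + x • Db) Db := by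
    rw [Matrix.fromBlocks_multiply]
    simp [mul_smul_comm, smul_mul_assoc]
  have h2 : Matrix.fromBlocks (0 : Matrix n n R) (-1) (Cb + x • Db) Db *
      Matrix.fromBlocks (0 : Matrix n n R) (-1) (1 : Matrix n n R) 0 =
      Matrix.fromBlocks (-1) 0 Db (-(Cb + x • Db)) := by
    rw [Matrix.fromBlocks_multiply]
    simp
  have hdetU : (Matrix.fromBlocks (1 : Matrix n n R) 0 (x • (1 : Matrix n n R)) 1).det = 1 := by
    rw [Matrix.det_fromBlocks_zero₁₂]; simp
  calc (Matrix.fromBlocks (x • (1 : Matrix n n R)) (-1) Cb Db).det *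
      (Matrix.fromBlocks (0 : Matrix n n R) (-1) (1 : Matrix n n R) 0).det
      = ((Matrix.fromBlocks (x • (1 : Matrix n n R)) (-1) Cb Db).det * 1) *
        (Matrix.fromBlocks (0 : Matrix n n R) (-1) (1 : Matrix n n R) 0).det := by ring
    _ = (Matrix.fromBlocks (x • (1 : Matrix n n R)) (-1) Cb Db *
          Matrix.fromBlocks 1 0 (x • (1 : Matrix n n R)) 1 *
          Matrix.fromBlocks (0 : Matrix n n R) (-1) (1 : Matrix n n R) 0).det := by
        rw [Matrix.det_mul, Matrix.det_mul, hdetU]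
    _ = (Matrix.fromBlocks (-1 : Matrix n n R) 0 Db (-(Cb + x • Db))).det := by rw [h1, h2]
    _ = (Cb + x • Db).det := by
        rw [Matrix.det_fromBlocks_zero₁₂, Matrix.det_neg, Matrix.det_neg, Matrix.det_one, mul_one]
        rw [← mul_assoc, ← mul_pow]
        simp

lemma aux_rootMult_prod {R : Type*} [CommRing R] [IsDomain R] [DecidableEq R] {ι : Type*}
    (s : Finset ι) (f : ι → R[X]) (hf : ∀ i ∈ s, f i ≠ 0) (a : R) :
    rootMultiplicity a (∏ i ∈ s, f i) = ∑ i ∈ s, rootMultiplicity a (f i) := by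
  classical
  induction s using Finset.cons_induction with
  | empty => simpa using Polynomial.rootMultiplicity_C 1 a
  | cons i s hi ih =>
    rw [Finset.prod_cons, Finset.sum_cons,
      Polynomial.rootMultiplicity_mul
        (mul_ne_zero (hf i (Finset.mem_cons_self i s))
          (Finset.prod_ne_zero_iff.2 fun j hj => hf j (Finset.mem_cons_of_mem hj))),
      ih fun j hj => hf j (Finset.mem_cons_of_mem hj)]

lemma aux_monic_quad {R : Type*} [CommRing R] [Nontrivial R] (a b : R) :
    (X ^ 2 + Polynomial.C a * X + Polynomial.C b).Monic := by
  rw [add_assoc]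
  apply Polynomial.monic_X_pow_add
  refine lt_of_le_of_lt (Polynomial.degree_add_le _ _) (max_lt ?_ ?_)
  · refine lt_of_le_of_lt (Polynomial.degree_mul_le _ _) ?_
    refine lt_of_le_of_lt (add_le_add Polynomial.degree_C_le Polynomial.degree_X_le) ?_
    norm_num
  · exact lt_of_le_of_lt Polynomial.degree_C_le (by norm_num)

set_option maxHeartbeats 1000000 in
theorem stmt8 {N : ℕ} (hN : 2 ≤ N) (L : Matrix (Fin N) (Fin N) ℝ)
    (hdiag : ∃ P : Matrix (Fin N) (Fin N) ℝ, IsUnit P.det ∧ (P⁻¹ * L * P).IsDiag)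
    (hspec : ∀ μ : ℂ, (L.map Complex.ofReal).charpoly.IsRoot μ →
      ∃ r : ℝ, 0 ≤ r ∧ μ = (r : ℂ))
    (h0 : (L.map Complex.ofReal).charpoly.rootMultiplicity 0 = 1)
    (lam1 lam2 : ℝ) (h1 : 0 < lam1) (h2 : 0 < lam2) :
    letI Φ : Matrix (Fin N ⊕ Fin N) (Fin N ⊕ Fin N) ℝ :=
      Matrix.fromBlocks 0 1 (-(lam1 • L.transpose)) (-(lam2 • L.transpose) - 1)
    ((Φ.map Complex.ofReal).charpoly.rootMultiplicity 0 = 1 ∧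
      ∀ μ : ℂ, (Φ.map Complex.ofReal).charpoly.IsRoot μ → μ ≠ 0 → μ.re < 0) := by
  set Φ : Matrix (Fin N ⊕ Fin N) (Fin N ⊕ Fin N) ℝ :=
    Matrix.fromBlocks 0 1 (-(lam1 • L.transpose)) (-(lam2 • L.transpose) - 1) with hΦ
  classical
  obtain ⟨P, hP, hD⟩ := hdiag
  set d : Fin N → ℝ := (P⁻¹ * L * P).diag with hd
  have hDL : P⁻¹ * L * P = Matrix.diagonal d := hD.diagonal_diag.symm
  have hPP : P⁻¹ * P = 1 := Matrix.nonsing_inv_mul P hP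
  have hPP' : P * P⁻¹ = 1 := Matrix.mul_nonsing_inv P hP
  set CR : ℝ →+* ℝ[X] := Polynomial.C with hCR
  have hQQ' : CR.mapMatrix P⁻¹ * CR.mapMatrix P = 1 := by
    rw [← _root_.map_mul, hPP, _root_.map_one]
  have hQ'Q : CR.mapMatrix P * CR.mapMatrix P⁻¹ = 1 := by
    rw [← _root_.map_mul, hPP', _root_.map_one]
  -- charpoly of L
  have hcmd : charmatrix (Matrix.diagonal d) = Matrix.diagonal (fun i => X - Polynomial.C (d i)) := by
    ext i j
    by_cases h : i = j
    · subst h; simp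
    · simp [h, Matrix.diagonal_apply_ne _ h]
  have hconj1 : charmatrix (P⁻¹ * L * P) = CR.mapMatrix P⁻¹ * charmatrix L * CR.mapMatrix P := by
    have hcomm : Matrix.scalar (Fin N) (X : ℝ[X]) * CR.mapMatrix P⁻¹
        = CR.mapMatrix P⁻¹ * Matrix.scalar (Fin N) (X : ℝ[X]) :=
      Matrix.scalar_commute (X : ℝ[X]) (fun r' => Commute.all _ _) (CR.mapMatrix P⁻¹)
    have hscalar : CR.mapMatrix P⁻¹ * Matrix.scalar (Fin N) (X : ℝ[X]) * CR.mapMatrix P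
        = Matrix.scalar (Fin N) (X : ℝ[X]) := by
      rw [← hcomm, Matrix.mul_assoc, hQQ', Matrix.mul_one]
    have hmapm : CR.mapMatrix P⁻¹ * CR.mapMatrix L * CR.mapMatrix P
        = CR.mapMatrix (P⁻¹ * L * P) := by
      rw [← _root_.map_mul, ← _root_.map_mul]
    simp only [Matrix.charmatrix]
    rw [Matrix.mul_sub, Matrix.sub_mul, hscalar, hmapm]
  have hLchar : L.charpoly = ∏ i, (X - Polynomial.C (d i)) := by
    calc L.charpoly = (charmatrix L).det := rfl
      _ = (CR.mapMatrix P⁻¹ * charmatrix L * CR.mapMatrix P).det :=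
          (Matrix.det_conj_of_mul_eq_one hQQ' hQ'Q).symm
      _ = (charmatrix (P⁻¹ * L * P)).det := by rw [hconj1]
      _ = (charmatrix (Matrix.diagonal d)).det := by rw [hDL]
      _ = ∏ i, (X - Polynomial.C (d i)) := by rw [hcmd, Matrix.det_diagonal]
  have hLC : (L.map Complex.ofReal).charpoly = ∏ i, (X - Polynomial.C ((d i : ℂ))) := by
    have he : L.map Complex.ofReal = L.map ⇑Complex.ofRealHom := rfl
    rw [he, Matrix.charpoly_map, hLchar, Polynomial.map_prod]
    simp
  have hd0 : ∀ i, 0 ≤ d i := by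
    intro i
    have hr : (L.map Complex.ofReal).charpoly.IsRoot ((d i : ℂ)) := by
      rw [hLC, Polynomial.IsRoot, Polynomial.eval_prod]
      exact Finset.prod_eq_zero (Finset.mem_univ i) (by simp)
    obtain ⟨r, hr0, hre⟩ := hspec _ hr
    have : d i = r := by exact_mod_cast hre
    linarith
  have hcnt : ∑ i, (if d i = (0 : ℝ) then 1 else 0) = 1 := by
    calc ∑ i, (if d i = (0:ℝ) then 1 else 0)
        = ∑ i, rootMultiplicity (0 : ℂ) (X - Polynomial.C ((d i : ℂ))) := by
          refine Finset.sum_congr rfl fun i _ => ?_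
          rw [Polynomial.rootMultiplicity_X_sub_C]
          by_cases h : d i = 0 <;> simp [h, eq_comm]
      _ = rootMultiplicity 0 (∏ i, (X - Polynomial.C ((d i : ℂ)))) :=
          (aux_rootMult_prod _ _ (fun i _ => Polynomial.X_sub_C_ne_zero _) 0).symm
      _ = 1 := by rw [← hLC]; exact h0
  -- charpoly of Φ
  set M' : Matrix (Fin N) (Fin N) ℝ[X] := L.transpose.map ⇑CR with hM'
  have hcm : charmatrix Φ = Matrix.fromBlocks ((X : ℝ[X]) • 1) (-1)
      (Polynomial.C lam1 • M') (charmatrix (-(lam2 • L.transpose) - 1)) := by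
    rw [hΦ, Matrix.charmatrix_fromBlocks]
    have e1 : charmatrix (0 : Matrix (Fin N) (Fin N) ℝ) = (X : ℝ[X]) • 1 := by
      ext i j
      by_cases h : i = j <;> simp [h, Matrix.one_apply]
    have e2 : -((1 : Matrix (Fin N) (Fin N) ℝ).map ⇑(Polynomial.C : ℝ →+* ℝ[X]))
        = (-1 : Matrix (Fin N) (Fin N) ℝ[X]) := by
      ext i j
      by_cases h : i = j <;> simp [h, Matrix.one_apply]
    have e3 : -((-(lam1 • L.transpose)).map ⇑(Polynomial.C : ℝ →+* ℝ[X]))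
        = Polynomial.C lam1 • M' := by
      ext i j
      simp [hM', hCR, Matrix.map_apply]
    rw [e1, e2, e3]
  have key := aux_det_fromBlocks (X : ℝ[X]) (Polynomial.C lam1 • M')
    (charmatrix (-(lam2 • L.transpose) - 1))
  set s : ℝ[X] :=
    (Matrix.fromBlocks (0 : Matrix (Fin N) (Fin N) ℝ[X]) (-1) 1
      (0 : Matrix (Fin N) (Fin N) ℝ[X])).det with hsdef
  have hs : Φ.charpoly * s
      = (Polynomial.C lam1 • M' + (X : ℝ[X]) • charmatrix (-(lam2 • L.transpose) - 1)).det := by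
    rw [Matrix.charpoly, hcm]; exact key
  have hEdet : (Polynomial.C lam1 • M' + (X : ℝ[X]) • charmatrix (-(lam2 • L.transpose) - 1)).det
      = ∏ i, (X ^ 2 + Polynomial.C (1 + lam2 * d i) * X + Polynomial.C (lam1 * d i)) := by
    have hEt : (Polynomial.C lam1 • M' + (X : ℝ[X]) • charmatrix (-(lam2 • L.transpose) - 1))ᵀ
        = ((X : ℝ[X]) ^ 2 + X) • 1
          + (Polynomial.C lam1 + Polynomial.C lam2 * X) • (CR.mapMatrix L) := by
      refine Matrix.ext fun i j => ?_
      by_cases h : i = j <;>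
        simp [h, hM', hCR, charmatrix_apply, Matrix.map_apply, Matrix.one_apply,
          Matrix.diagonal_apply, RingHom.mapMatrix_apply, eq_comm] <;> ring
    rw [← Matrix.det_transpose, hEt]
    have hmid : CR.mapMatrix P⁻¹ * CR.mapMatrix L * CR.mapMatrix P
        = Matrix.diagonal (fun i => Polynomial.C (d i)) := by
      rw [← _root_.map_mul, ← _root_.map_mul, hDL]
      ext i j
      by_cases h : i = j <;> simp [h, RingHom.mapMatrix_apply, Matrix.map_apply,
        Matrix.diagonal_apply, hCR]
    have hconj : CR.mapMatrix P⁻¹ *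
        ((((X : ℝ[X]) ^ 2 + X) • 1
          + (Polynomial.C lam1 + Polynomial.C lam2 * X) • CR.mapMatrix L)) *
        CR.mapMatrix P
        = Matrix.diagonal (fun i =>
            X ^ 2 + Polynomial.C (1 + lam2 * d i) * X + Polynomial.C (lam1 * d i)) := by
      rw [Matrix.mul_add, Matrix.add_mul, mul_smul_comm, mul_smul_comm, smul_mul_assoc,
        smul_mul_assoc, Matrix.mul_one, hQQ', hmid]
      refine Matrix.ext fun i j => ?_
      by_cases h : i = j <;>
        simp [h, Matrix.diagonal_apply, Matrix.one_apply, map_add, _root_.map_mul] <;> ring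
    rw [← Matrix.det_conj_of_mul_eq_one hQQ' hQ'Q, hconj, Matrix.det_diagonal]
  have hmon : ∀ i, (X ^ 2 + Polynomial.C (1 + lam2 * d i) * X
      + Polynomial.C (lam1 * d i) : ℝ[X]).Monic := fun i => aux_monic_quad _ _
  have hprodmonic : (∏ i, (X ^ 2 + Polynomial.C (1 + lam2 * d i) * X
      + Polynomial.C (lam1 * d i) : ℝ[X])).Monic :=
    Polynomial.monic_prod_of_monic _ _ fun i _ => hmon i
  have hchmon : Φ.charpoly.Monic := Matrix.charpoly_monic Φ
  have hchdeg : Φ.charpoly.natDegree = 2 * N := by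
    rw [Matrix.charpoly_natDegree_eq_dim]
    simp [Fintype.card_sum]
    ring
  have hproddeg : (∏ i, (X ^ 2 + Polynomial.C (1 + lam2 * d i) * X
      + Polynomial.C (lam1 * d i) : ℝ[X])).natDegree = 2 * N := by
    rw [Polynomial.natDegree_prod _ _ fun i _ => (hmon i).ne_zero]
    have : ∀ i : Fin N, (X ^ 2 + Polynomial.C (1 + lam2 * d i) * X
        + Polynomial.C (lam1 * d i) : ℝ[X]).natDegree = 2 := by
      intro i
      have := Polynomial.natDegree_quadratic (a := (1:ℝ)) (b := 1 + lam2 * d i)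
        (c := lam1 * d i) one_ne_zero
      simpa using this
    calc ∑ i, (X ^ 2 + Polynomial.C (1 + lam2 * d i) * X
        + Polynomial.C (lam1 * d i) : ℝ[X]).natDegree = ∑ _i : Fin N, 2 :=
          Finset.sum_congr rfl fun i _ => this i
      _ = 2 * N := by simp [Finset.sum_const, Finset.card_univ, mul_comm]
  have hsne : s ≠ 0 := by
    intro h
    exact hprodmonic.ne_zero (by rw [← hEdet, ← hs, h, mul_zero])
  have hs1 : s = 1 := by
    have hdeg := Polynomial.natDegree_mul hchmon.ne_zero hsne
    rw [hs, hEdet, hproddeg, hchdeg] at hdeg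
    have hsdeg : s.natDegree = 0 := by omega
    have hlc := Polynomial.leadingCoeff_mul Φ.charpoly s
    rw [hs, hEdet, hprodmonic.leadingCoeff, hchmon.leadingCoeff, one_mul] at hlc
    have := Polynomial.eq_C_of_natDegree_eq_zero hsdeg
    rw [this]
    rw [Polynomial.leadingCoeff, hsdeg] at hlc
    rw [← hlc, Polynomial.C_1]
  have hPhiR : Φ.charpoly = ∏ i, (X ^ 2 + Polynomial.C (1 + lam2 * d i) * X
      + Polynomial.C (lam1 * d i)) := by
    rw [← mul_one Φ.charpoly, ← hs1, hs, hEdet]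
  have hPhiC : (Φ.map Complex.ofReal).charpoly =
      ∏ i, (X ^ 2 + Polynomial.C (((1 + lam2 * d i : ℝ)) : ℂ) * X
        + Polynomial.C (((lam1 * d i : ℝ)) : ℂ)) := by
    have he : Φ.map Complex.ofReal = Φ.map ⇑Complex.ofRealHom := rfl
    rw [he, Matrix.charpoly_map, hPhiR, Polynomial.map_prod]
    refine Finset.prod_congr rfl fun i _ => ?_
    simp
  constructor
  · rw [hPhiC, aux_rootMult_prod _ _ (fun i _ => (aux_monic_quad _ _).ne_zero) 0]
    rw [← hcnt]
    refine Finset.sum_congr rfl fun i _ => ?_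
    by_cases h : d i = 0
    · rw [if_pos h]
      have hfac : (X ^ 2 + Polynomial.C (((1 + lam2 * d i : ℝ)) : ℂ) * X
          + Polynomial.C (((lam1 * d i : ℝ)) : ℂ)) = X * (X + 1) := by
        rw [h]
        norm_num
        ring
      rw [hfac, Polynomial.rootMultiplicity_mul (by
        apply mul_ne_zero Polynomial.X_ne_zero
        simpa using Polynomial.X_add_C_ne_zero (1 : ℂ))]
      have hX : rootMultiplicity (0 : ℂ) X = 1 := by
        simpa using Polynomial.rootMultiplicity_X_sub_C_self (x := (0 : ℂ))
      have hX1 : rootMultiplicity (0 : ℂ) (X + 1) = 0 :=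
        Polynomial.rootMultiplicity_eq_zero (by simp [Polynomial.IsRoot])
      rw [hX, hX1]
    · rw [if_neg h]
      apply Polynomial.rootMultiplicity_eq_zero
      simp only [Polynomial.IsRoot, Polynomial.eval_add, Polynomial.eval_pow,
        Polynomial.eval_mul, Polynomial.eval_X, Polynomial.eval_C]
      intro hcon
      simp at hcon
      exact h (by
        rcases hcon with h' | h'
        · linarith
        · exact h')
  · intro μ hroot hne
    rw [hPhiC, Polynomial.IsRoot, Polynomial.eval_prod, Finset.prod_eq_zero_iff] at hroot
    obtain ⟨i, -, hev⟩ := hroot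
    simp only [Polynomial.eval_add, Polynomial.eval_pow, Polynomial.eval_mul,
      Polynomial.eval_X, Polynomial.eval_C] at hev
    set b : ℝ := 1 + lam2 * d i with hbdef
    set c : ℝ := lam1 * d i with hcdef
    have hb : 0 < b := by have := hd0 i; nlinarith
    have hc : 0 ≤ c := mul_nonneg h1.le (hd0 i)
    have hre' : μ.re * μ.re - μ.im * μ.im + b * μ.re + c = 0 := by
      have := congrArg Complex.re hev
      simpa [pow_two, Complex.mul_re, Complex.add_re] using this
    have him' : μ.im * (2 * μ.re + b) = 0 := by
      have := congrArg Complex.im hev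
      simp [pow_two, Complex.mul_im, Complex.add_im] at this
      nlinarith [this]
    rcases mul_eq_zero.mp him' with hy | hx
    · have hxne : μ.re ≠ 0 := by
        intro hx0
        exact hne (Complex.ext hx0 hy)
      by_contra hcon
      push_neg at hcon
      have hxpos : 0 < μ.re := lt_of_le_of_ne hcon (Ne.symm hxne)
      nlinarith [hre']
    · linarith
end

section
/- Let Ω ≠ 0, R > 0, μ > 0, σ ∈ ℝ. The real cubic polynomial λ³ + 2λ² + [(2Ω-1)² + 1 + μR^{σ+1}]λ + μR^{σ+1} is Hurwitz stable, i.e., all of its complex roots have strictly negative real parts. -/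
theorem stmt13 (Ω R μ σ : ℝ) (hΩ : Ω ≠ 0) (hR : 0 < R) (hμ : 0 < μ) :
    ∀ ζ : ℂ, ζ ^ 3 + 2 * ζ ^ 2
        + (((2 * Ω - 1) ^ 2 + 1 + μ * R ^ (σ + 1) : ℝ) : ℂ) * ζ
        + ((μ * R ^ (σ + 1) : ℝ) : ℂ) = 0 →
      ζ.re < 0 := by
  intro ζ h
  by_contra hx
  push_neg at hx
  obtain ⟨m, hm, hmdef⟩ : ∃ m : ℝ, 0 < m ∧ μ * R ^ (σ + 1) = m :=
    ⟨_, mul_pos hμ (Real.rpow_pos_of_pos hR _), rfl⟩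
  rw [hmdef] at h
  set a : ℝ := (2 * Ω - 1) ^ 2 + 1 + m with hadef
  have ha : 1 + m ≤ a := by nlinarith [sq_nonneg (2 * Ω - 1)]
  obtain ⟨x, y⟩ := ζ
  simp only [Complex.ext_iff, Complex.add_re, Complex.add_im, Complex.mul_re,
    Complex.mul_im, Complex.ofReal_re, Complex.ofReal_im, Complex.zero_re,
    Complex.zero_im, pow_succ, pow_zero, one_mul, Complex.re_ofNat,
    Complex.im_ofNat] at h hx
  obtain ⟨hre, him⟩ := h
  ring_nf at hre him hx
  rcases eq_or_ne y 0 with hy | hy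
  · subst hy
    nlinarith [hx, hm, ha, mul_nonneg (mul_nonneg hx hx) hx, sq_nonneg x]
  · have hy2 : y ^ 2 = 3 * x ^ 2 + 4 * x + a := by
      have h0 : y * (3 * x ^ 2 - y ^ 2 + 4 * x + a) = 0 := by linear_combination him
      rcases mul_eq_zero.mp h0 with h1 | h1
      · exact absurd h1 hy
      · linarith
    nlinarith [hre, hy2, hx, hm, ha, mul_nonneg (mul_nonneg hx hx) hx, sq_nonneg x,
      mul_le_mul_of_nonneg_left ha hx]
end

section
/- Let A be the 3×3 real matrix [[0, 0, -ΩR], [Ω s, -1, RΩ(Ω-1)s], [(2Ω-1)/R + μR^σ/Ω, (s/R)(1/Ω - 2), -1]], where s = sign(Ω) ∈ {±1}, Ω ≠ 0, R > 0, μ > 0, σ ∈ ℝ. Then the characteristic polynomial of A equals λ³ + 2λ² + [(2Ω-1)² + 1 + μR^{σ+1}]λ + μR^{σ+1}. -/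
open Polynomial in
theorem stmt17 (Ω R μ σ s : ℝ) (hΩ : Ω ≠ 0) (hR : 0 < R) (hμ : 0 < μ)
    (hs : s = Real.sign Ω) :
    let A : Matrix (Fin 3) (Fin 3) ℝ :=
      !![0, 0, -(Ω * R);
         Ω * s, -1, R * Ω * (Ω - 1) * s;
         (2 * Ω - 1) / R + μ * R ^ σ / Ω, (s / R) * (1 / Ω - 2), -1]
    A.charpoly = X ^ 3 + C 2 * X ^ 2
        + C ((2 * Ω - 1) ^ 2 + 1 + μ * R ^ (σ + 1)) * X
        + C (μ * R ^ (σ + 1)) := by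
  intro A
  have hs2 : s * s = 1 := by
    rcases hΩ.lt_or_gt with h | h
    · simp [hs, Real.sign_of_neg h]
    · simp [hs, Real.sign_of_pos h]
  have hrp : R ^ (σ + 1) = R ^ σ * R := by
    rw [Real.rpow_add hR, Real.rpow_one]
  apply Polynomial.funext
  intro x
  simp only [A, Matrix.charpoly, Matrix.charmatrix_apply, Matrix.det_fin_three,
    Matrix.map_apply, Matrix.sub_apply, Matrix.smul_apply, Matrix.one_apply,
    Matrix.of_apply, Matrix.cons_val, Fin.reduceEq, if_false, eval_zero, Matrix.cons_val_zero, Matrix.cons_val_one, Matrix.head_cons,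
    Matrix.head_fin_const, Matrix.empty_val', Matrix.cons_val_fin_one,
    Matrix.cons_val_two, Matrix.tail_cons, Fin.isValue,
    if_true, eval_add, eval_mul, eval_sub, eval_pow, eval_X, eval_C, eval_neg,
    eval_smul, smul_eq_mul, eval_one, eval_ofNat, Matrix.diagonal_apply]
  norm_num [hrp]
  field_simp
  linear_combination (Ω * R * Ω * (1 - Ω * 2) - x * (R * Ω * (Ω - 1) * (1 - Ω * 2)) + (x * (1 - 3 * Ω - Ω * R + 2 * Ω ^ 2 + 3 * Ω ^ 2 * R - 2 * Ω ^ 3 * R) + (Ω - 2 * Ω ^ 2 - Ω ^ 2 * R + 2 * Ω ^ 3 * R))) * hs2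
end
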